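/- arXiv:math/0611182 — 4 statements merged into one kernel-verified Lean document; each statement's English description precedes it below -/
import Mathlib

section
/- The Nikulin lattice N, defined as the even negative definite lattice of rank 8 generated by vectors N_1,...,N_8 with N_i·N_j = -2δ_{ij} together with the vector N̂ = (N_1+...+N_8)/2, has discriminant of absolute value 2^6, and its discriminant group N^∨/N is isomorphic to (ℤ/2ℤ)^6. -/
/-- Gram matrix of the Nikulin lattice in the basis `N₁,…,N₇, N̂`
    where `N̂ = (N₁+⋯+N₈)/2`, `Nᵢ·Nⱼ = -2δᵢⱼ`, `N̂·N̂ = -4`, `N̂·Nᵢ = -1`. -/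
def nikulinGram : Matrix (Fin 8) (Fin 8) ℤ :=
  fun i j =>
    if i = 7 then (if j = 7 then -4 else -1)
    else if j = 7 then -1
    else if i = j then -2 else 0

namespace NikulinAux

def U : Matrix (Fin 8) (Fin 8) ℤ :=
  !![-1,0,0,0,0,0,0,0; 4,0,0,0,0,0,0,-1; 1,0,-1,0,0,0,0,0; 1,0,0,-1,0,0,0,0;
     1,0,0,0,-1,0,0,0; 1,0,0,0,0,-1,0,0; 1,0,0,0,0,0,-1,0; -2,-1,-1,-1,-1,-1,-1,2]

def Ui : Matrix (Fin 8) (Fin 8) ℤ :=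
  !![-1,0,0,0,0,0,0,0; -1,-2,1,1,1,1,1,-1; -1,0,-1,0,0,0,0,0; -1,0,0,-1,0,0,0,0;
     -1,0,0,0,-1,0,0,0; -1,0,0,0,0,-1,0,0; -1,0,0,0,0,0,-1,0; -4,-1,0,0,0,0,0,0]

def V : Matrix (Fin 8) (Fin 8) ℤ :=
  !![0,0,0,0,0,0,0,1; 0,1,-1,-1,-1,-1,-1,2; 0,0,1,0,0,0,0,1; 0,0,0,1,0,0,0,1;
     0,0,0,0,1,0,0,1; 0,0,0,0,0,1,0,1; 0,0,0,0,0,0,1,1; 1,0,0,0,0,0,0,-2]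

def Vi : Matrix (Fin 8) (Fin 8) ℤ :=
  !![2,0,0,0,0,0,0,1; -7,1,1,1,1,1,1,0; -1,0,1,0,0,0,0,0; -1,0,0,1,0,0,0,0;
     -1,0,0,0,1,0,0,0; -1,0,0,0,0,1,0,0; -1,0,0,0,0,0,1,0; 1,0,0,0,0,0,0,0]

def d : Fin 8 → ℤ := ![1,1,2,2,2,2,2,2]

def emb (i : Fin 6) : Fin 8 := ⟨i.val + 2, by omega⟩

lemma hUUi : U * Ui = 1 := by decide
lemma hUiU : Ui * U = 1 := by decide
lemma hVVi : V * Vi = 1 := by decide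
lemma hViV : Vi * V = 1 := by decide
lemma hUG : U * nikulinGram = Matrix.diagonal d * Vi := by decide
lemma hGV : nikulinGram * V = Ui * Matrix.diagonal d := by decide
lemma hG : nikulinGram = Ui * (Matrix.diagonal d * Vi) := by decide
lemma hdemb : ∀ i : Fin 6, d (emb i) = 2 := by decide

/-- The reduction map `ℤ⁸ → (ℤ/2)⁶`, `v ↦ (U v)ᵢ₊₂ mod 2`. -/
def f : (Fin 8 → ℤ) →ₗ[ℤ] (Fin 6 → ZMod 2) where
  toFun v := fun i => (((U.mulVec v) (emb i) : ℤ) : ZMod 2)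
  map_add' v w := by
    funext i
    simp [Matrix.mulVec_add]
  map_smul' c v := by
    funext i
    show ((U.mulVec (c • v) (emb i) : ℤ) : ZMod 2) = _
    rw [Matrix.mulVec_smul]
    simp [zsmul_eq_mul]

lemma range_le_ker : LinearMap.range (Matrix.toLin' nikulinGram) ≤ LinearMap.ker f := by
  rintro x ⟨w, rfl⟩
  simp only [LinearMap.mem_ker]
  funext i
  have : U.mulVec (Matrix.toLin' nikulinGram w) =
      (Matrix.diagonal d).mulVec (Vi.mulVec w) := by
    rw [Matrix.toLin'_apply, Matrix.mulVec_mulVec, hUG, ← Matrix.mulVec_mulVec]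
  show (((U.mulVec (Matrix.toLin' nikulinGram w)) (emb i) : ℤ) : ZMod 2) = 0
  rw [this, Matrix.mulVec_diagonal, hdemb, Int.cast_mul]
  have h2 : ((2 : ℤ) : ZMod 2) = 0 := by decide
  rw [h2, zero_mul]

lemma ker_le_range : LinearMap.ker f ≤ LinearMap.range (Matrix.toLin' nikulinGram) := by
  intro v hv
  have hv' : ∀ i : Fin 6, (2 : ℤ) ∣ (U.mulVec v) (emb i) := by
    intro i
    have : (((U.mulVec v) (emb i) : ℤ) : ZMod 2) = 0 := congrFun hv i
    exact_mod_cast (ZMod.intCast_zmod_eq_zero_iff_dvd _ 2).mp this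
  choose c hc using hv'
  set u := U.mulVec v with hu
  refine ⟨V.mulVec (fun j => if h : j.val < 2 then u j else c ⟨j.val - 2, by omega⟩), ?_⟩
  set w : Fin 8 → ℤ := fun j => if h : j.val < 2 then u j else c ⟨j.val - 2, by omega⟩ with hw
  have hDw : (Matrix.diagonal d).mulVec w = u := by
    funext j
    rw [Matrix.mulVec_diagonal]
    fin_cases j
    · simp [hw, d]
    · simp [hw, d]
    · simpa [hw, d, emb] using (hc 0).symm
    · simpa [hw, d, emb] using (hc 1).symm
    · simpa [hw, d, emb] using (hc 2).symm
    · simpa [hw, d, emb] using (hc 3).symm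
    · simpa [hw, d, emb] using (hc 4).symm
    · simpa [hw, d, emb] using (hc 5).symm
  calc Matrix.toLin' nikulinGram (V.mulVec w)
      = (nikulinGram * V).mulVec w := by rw [Matrix.toLin'_apply, Matrix.mulVec_mulVec]
    _ = Ui.mulVec ((Matrix.diagonal d).mulVec w) := by
        rw [hGV, ← Matrix.mulVec_mulVec]
    _ = Ui.mulVec (U.mulVec v) := by rw [hDw]
    _ = v := by rw [Matrix.mulVec_mulVec, hUiU, Matrix.one_mulVec]

lemma f_surjective : Function.Surjective f := by
  intro y
  refine ⟨Ui.mulVec (fun j => if h : 2 ≤ j.val then ((y ⟨j.val - 2, by omega⟩).val : ℤ) else 0), ?_⟩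
  set z : Fin 8 → ℤ :=
    fun j => if h : 2 ≤ j.val then ((y ⟨j.val - 2, by omega⟩).val : ℤ) else 0 with hz
  funext i
  have h1 : U.mulVec (Ui.mulVec z) = z := by
    rw [Matrix.mulVec_mulVec, hUUi, Matrix.one_mulVec]
  show (((U.mulVec (Ui.mulVec z)) (emb i) : ℤ) : ZMod 2) = y i
  rw [h1]
  have h2 : z (emb i) = ((y i).val : ℤ) := by
    simp only [hz, emb]
    rw [dif_pos (by omega)]
    congr 1
  rw [h2]
  push_cast
  simp [ZMod.natCast_val, ZMod.cast_id]

lemma detAux {R : Type} [CommRing R] (G B C : Matrix (Fin 8) (Fin 8) R) (dv : Fin 8 → R)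
    (hG : G = B * (Matrix.diagonal dv * C)) :
    G.det = B.det * ((dv 0 * dv 1 * dv 2 * dv 3 * dv 4 * dv 5 * dv 6 * dv 7) * C.det) := by
  rw [hG, Matrix.det_mul, Matrix.det_mul, Matrix.det_diagonal, Fin.prod_univ_eight]

lemma invAux {R : Type} [CommRing R] (A B : Matrix (Fin 8) (Fin 8) R) (h : A * B = 1) :
    A.det * B.det = 1 := by rw [← Matrix.det_mul, h, Matrix.det_one]

end NikulinAux

open NikulinAux in
/-- The Nikulin lattice has discriminant of absolute value `2^6` and
    discriminant group `(ℤ/2ℤ)^6`. -/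
theorem nikulin_discriminant :
    nikulinGram.det.natAbs = 2 ^ 6 ∧
    Nonempty (((Fin 8 → ℤ) ⧸ LinearMap.range (Matrix.toLin' nikulinGram)) ≃+
      (Fin 6 → ZMod 2)) := by
  constructor
  · have e1 := detAux nikulinGram Ui Vi d hG
    have e2 : Ui.det = 1 ∨ Ui.det = -1 :=
      Int.isUnit_iff.mp (IsUnit.of_mul_eq_one _ (invAux Ui U hUiU))
    have e3 : Vi.det = 1 ∨ Vi.det = -1 :=
      Int.isUnit_iff.mp (IsUnit.of_mul_eq_one _ (invAux Vi V hViV))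
    simp only [d] at e1
    rcases e2 with h2 | h2 <;> rcases e3 with h3 | h3 <;>
      rw [h2, h3] at e1 <;> rw [e1] <;> decide
  · refine ⟨LinearEquiv.toAddEquiv (LinearEquiv.ofBijective
      ((LinearMap.range (Matrix.toLin' nikulinGram)).liftQ f range_le_ker) ⟨?_, ?_⟩)⟩
    · rw [← LinearMap.ker_eq_bot]
      exact Submodule.ker_liftQ_eq_bot _ _ _ ker_le_range
    · rw [← LinearMap.range_eq_top, Submodule.range_liftQ, LinearMap.range_eq_top]
      exact f_surjective
end

section
/- Let L_{2d} = ℤL ⊕ N be the lattice of rank 9 with L² = 2d > 0 and N the Nikulin lattice. Suppose Γ is an even overlattice of L_{2d} of index 2 in which N embeds primitively, generated by L_{2d} and a class (L+v)/2 with v ∈ N. Then, after replacing v by an element in the same coset mod 2N, one has: v = Σα_iN_i with all α_i ∈ ℤ, Σα_i is even, v² ∈ 4ℤ, v·N_i ∈ 2ℤ for all i, d is even, and L² + v² ≡ 0 mod 8. -/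
/-- The bilinear form on `ℚL ⊕ (N ⊗ ℚ)` with `L² = 2d`, `L·Nᵢ = 0`,
    `Nᵢ·Nⱼ = -2δᵢⱼ`. -/
def pairL (d : ℤ) (x y : ℚ × (Fin 8 → ℚ)) : ℚ :=
  2 * d * x.1 * y.1 - 2 * ∑ i, x.2 i * y.2 i

/-- Classification of even index-2 overlattices of `L_{2d} = ℤL ⊕ N` in which
    `N` is primitive: the glue vector `(L+v)/2` may be chosen with
    `v = Σ αᵢNᵢ`, `αᵢ ∈ ℤ`, `Σαᵢ` even, `v² ∈ 4ℤ`, `v·Nᵢ ∈ 2ℤ`, `d` even, and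
    `L² + v² ≡ 0 (mod 8)`. -/
theorem overlattice_glue_vector (d : ℤ) (hd : 0 < d)
    (Nsub : Submodule ℤ (Fin 8 → ℚ))
    (hN : Nsub = Submodule.span ℤ
      (Set.range (fun i : Fin 8 => (Pi.single i 1 : Fin 8 → ℚ)) ∪ {fun _ => 1/2}))
    (Lfull Γ : Submodule ℤ (ℚ × (Fin 8 → ℚ)))
    (hL : Lfull = Submodule.span ℤ
      ({((1 : ℚ), (0 : Fin 8 → ℚ))} ∪ (Prod.mk (0 : ℚ) '' (Nsub : Set (Fin 8 → ℚ)))))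
    (v : Fin 8 → ℚ) (hv : v ∈ Nsub)
    (hΓ : Γ = Lfull ⊔ Submodule.span ℤ {(((1 : ℚ)/2, (1/2 : ℚ) • v))})
    (hindex : (((1 : ℚ)/2, (1/2 : ℚ) • v)) ∉ Lfull)
    (heven : ∀ x ∈ Γ, ∃ m : ℤ, pairL d x x = 2 * m)
    (hint : ∀ x ∈ Γ, ∀ y ∈ Γ, ∃ m : ℤ, pairL d x y = m)
    (hprim : ∀ x : Fin 8 → ℚ, ((0 : ℚ), x) ∈ Γ → x ∈ Nsub) :
    ∃ w : Fin 8 → ℤ,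
      (∃ u ∈ Nsub, v = (fun i => (w i : ℚ)) + (2 : ℚ) • u) ∧
      Even (∑ i, w i) ∧
      (4 : ℤ) ∣ (-2 * ∑ i, (w i) ^ 2) ∧
      (∀ i, (2 : ℤ) ∣ (-2 * w i)) ∧
      Even d ∧
      (8 : ℤ) ∣ (2 * d + (-2 * ∑ i, (w i) ^ 2)) := by
  have hxΓ : (((1 : ℚ)/2, (1/2 : ℚ) • v)) ∈ Γ := by
    rw [hΓ]; exact Submodule.mem_sup_right (Submodule.mem_span_singleton_self _)
  have heiN : ∀ i, (Pi.single i 1 : Fin 8 → ℚ) ∈ Nsub := by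
    intro i; rw [hN]; exact Submodule.subset_span (Or.inl ⟨i, rfl⟩)
  have heiΓ : ∀ i, ((0 : ℚ), (Pi.single i 1 : Fin 8 → ℚ)) ∈ Γ := by
    intro i; rw [hΓ, hL]
    exact Submodule.mem_sup_left (Submodule.subset_span (Or.inr ⟨_, heiN i, rfl⟩))
  have hhN : (fun _ => (1:ℚ)/2) ∈ Nsub := by
    rw [hN]; exact Submodule.subset_span (Or.inr rfl)
  have hhΓ : ((0 : ℚ), (fun _ => (1:ℚ)/2)) ∈ Γ := by
    rw [hΓ, hL]
    exact Submodule.mem_sup_left (Submodule.subset_span (Or.inr ⟨_, hhN, rfl⟩))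
  -- each coordinate of v is an integer
  have key1 : ∀ i, ∃ n : ℤ, v i = (n : ℚ) := by
    intro i
    obtain ⟨m, hm⟩ := hint _ hxΓ _ (heiΓ i)
    refine ⟨-m, ?_⟩
    have hc : pairL d ((1:ℚ)/2, (1/2:ℚ) • v) ((0:ℚ), (Pi.single i 1 : Fin 8 → ℚ))
        = -(v i) := by
      simp [pairL, Pi.single_apply, mul_ite, Finset.sum_ite_eq']
    rw [hc] at hm
    push_cast
    linarith
  choose w hw using key1
  refine ⟨w, ⟨0, Nsub.zero_mem, by funext i; simp [hw i]⟩, ?_⟩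
  -- sum of v_i is even
  obtain ⟨m, hm⟩ := hint _ hxΓ _ hhΓ
  have hc : pairL d ((1:ℚ)/2, (1/2:ℚ) • v) ((0:ℚ), (fun _ => (1:ℚ)/2))
      = -(1/2) * ∑ i, v i := by
    simp [pairL, Finset.mul_sum]
    ring_nf
  rw [hc] at hm
  have hsum : (∑ i, w i) = -2 * m := by
    have : ((∑ i, w i : ℤ) : ℚ) = ((-2 * m : ℤ) : ℚ) := by
      push_cast
      rw [show (∑ i, (w i : ℚ)) = ∑ i, v i from Finset.sum_congr rfl fun i _ => (hw i).symm]
      linarith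
    exact_mod_cast this
  -- evenness of the glue vector
  obtain ⟨m', hm'⟩ := heven _ hxΓ
  have hc2 : pairL d ((1:ℚ)/2, (1/2:ℚ) • v) ((1:ℚ)/2, (1/2:ℚ) • v)
      = (d : ℚ)/2 - (1/2) * ∑ i, (v i)^2 := by
    simp [pairL, Finset.mul_sum]
    ring_nf
  rw [hc2] at hm'
  have hsq : d - (∑ i, (w i)^2) = 4 * m' := by
    have : ((d - ∑ i, (w i)^2 : ℤ) : ℚ) = ((4 * m' : ℤ) : ℚ) := by
      push_cast
      rw [show (∑ i, (w i : ℚ)^2) = ∑ i, (v i)^2 from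
        Finset.sum_congr rfl fun i _ => by rw [hw i]]
      linarith
    exact_mod_cast this
  -- parity: ∑ w i ^2 ≡ ∑ w i mod 2
  have hpar : (2 : ℤ) ∣ (∑ i, (w i)^2) - (∑ i, w i) := by
    rw [← Finset.sum_sub_distrib]
    refine Finset.dvd_sum fun i _ => ?_
    have := Int.even_mul_succ_self (w i - 1)
    obtain ⟨k, hk⟩ := this
    exact ⟨k, by nlinarith⟩
  obtain ⟨k, hk⟩ := hpar
  refine ⟨?_, ?_, fun i => ⟨-w i, by ring⟩, ?_, ?_⟩
  · exact ⟨-m, by omega⟩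
  · omega
  · exact Int.even_iff.mpr (by omega)
  · omega
end

section
/- Let d ≥ 5 be an integer. Let C = aL + Σ_{i=1}^8 b_iN_i in (ℤL ⊕ N)⊗ℚ with a ∈ (1/2)ℤ, a ≥ 1/2, b_i ∈ (1/2)ℤ, b_i ≤ 0, where L² = 2d, L·N_i = 0, N_i·N_j = -2δ_{ij}. If C·(L - N̂) ≤ 0, where N̂ = (N_1+...+N_8)/2, then C² < -2. -/
/-! Writing `s = Σ bᵢ`, the hypothesis gives `-s ≥ 2da > 0`, so Cauchy–Schwarz yields
`4d²a² ≤ s² ≤ 8 Σ bᵢ²`. Hence `C² ≤ 2da² - d²a² = -d(d-2)a² ≤ -15/4`. -/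

open Finset

theorem sq_le_card_mul_sum_sq_of_add_sum_nonpos {ι R : Type*} [Fintype ι]
    [CommRing R] [LinearOrder R] [IsStrictOrderedRing R] {c : R} (hc : 0 ≤ c) (b : ι → R)
    (h : c + ∑ i, b i ≤ 0) : c ^ 2 ≤ Fintype.card ι * ∑ i, b i ^ 2 :=
  calc c ^ 2 ≤ (-∑ i, b i) ^ 2 := pow_le_pow_left₀ hc (by linarith) 2
    _ = (∑ i, b i) ^ 2 := neg_sq _
    _ ≤ Fintype.card ι * ∑ i, b i ^ 2 := by
      simpa using sq_sum_le_card_mul_sum_sq (s := univ) (f := b)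

theorem ample_L_minus_Nhat_general (d : ℤ) (hd : 5 ≤ d)
    (a : ℚ) (b : Fin 8 → ℚ)
    (ha : 1/2 ≤ a)
    (hneg : 2 * d * a + ∑ i, b i ≤ 0) :
    2 * d * a ^ 2 - 2 * ∑ i, (b i) ^ 2 < -2 := by
  have hd' : (5 : ℚ) ≤ d := by exact_mod_cast hd
  have hsum : (2 * d * a) ^ 2 ≤ 8 * ∑ i, b i ^ 2 := by
    simpa using sq_le_card_mul_sum_sq_of_add_sum_nonpos (by positivity) b hneg
  have ha_sq : 1 / 4 ≤ a ^ 2 := by nlinarith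
  calc 2 * d * a ^ 2 - 2 * ∑ i, b i ^ 2 ≤ -(d * (d - 2) * a ^ 2) := by nlinarith
    _ ≤ -(5 * 3 * (1 / 4)) := by
      gcongr
      · nlinarith
      · linarith
    _ < -2 := by norm_num

/-- Ampleness computation for `L - N̂` when `L² = 2d ≥ 10`: if
    `C = aL + Σ bᵢNᵢ` with `a, bᵢ ∈ ½ℤ`, `a ≥ ½`, `bᵢ ≤ 0` and
    `C·(L - N̂) ≤ 0`, then `C² < -2`. -/
theorem ample_L_minus_Nhat (d : ℤ) (hd : 5 ≤ d)
    (a : ℚ) (b : Fin 8 → ℚ)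
    (ha2 : ∃ a' : ℤ, a = (a' : ℚ) / 2) (ha : 1/2 ≤ a)
    (hb2 : ∀ i, ∃ m : ℤ, b i = (m : ℚ) / 2) (hb : ∀ i, b i ≤ 0)
    (hneg : 2 * d * a + ∑ i, b i ≤ 0) :
    2 * d * a ^ 2 - 2 * ∑ i, (b i) ^ 2 < -2 :=
  ample_L_minus_Nhat_general d hd a b ha hneg
end

section
/- Let d ≥ 5 and consider the lattice with L² = 2d, L·N_i = 0, N_i·N_j = -2δ_{ij}. Let E = aL + Σ_{i=1}^8 b_iN_i with a ∈ (1/2)ℤ, a ≥ 1/2 (and a ∈ ℤ if d is odd), b_i ∈ (1/2)ℤ, b_i ≤ 0. If E·(L - N̂) = 2 with N̂ = (N_1+...+N_8)/2, then E² < 0; in particular there is no such class with E² = 0. -/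
/-!
Write `E² = 2da² - 2Σbᵢ²`. The condition `E·(L - N̂) = 2` gives `Σbᵢ = 2 - 2da`, and
Cauchy–Schwarz over the eight nodes gives `(Σbᵢ)² ≤ 8Σbᵢ²`, hence
`E² ≤ 2da² - (da - 1)² = -(d(d-2)a² - 2da + 1)`. The quadratic `d(d-2)a² - 2da + 1` equals
`da((d-2)a - 2) + 1`, which is positive as soon as `(d-2)a ≥ 2`; this holds for `d ≥ 6, a ≥ ½`,
and for odd `d ≥ 5` because then `a` is a positive integer.
-/

open Finset

section

variable {K : Type*} [Field K] [LinearOrder K] [IsStrictOrderedRing K]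

theorem self_intersection_le_of_pairing_eq_two (d a : K) (b : Fin 8 → K)
    (hE : 2 * d * a + ∑ i, b i = 2) :
    2 * d * a ^ 2 - 2 * ∑ i, b i ^ 2 ≤ -(d * (d - 2) * a ^ 2 - 2 * d * a + 1) := by
  have hCS : (∑ i, b i) ^ 2 ≤ 8 * ∑ i, b i ^ 2 := by
    simpa using sq_sum_le_card_mul_sum_sq (s := (univ : Finset (Fin 8))) (f := b)
  have hsum : (∑ i, b i) ^ 2 = 4 * (d * a - 1) ^ 2 := by
    rw [show ∑ i, b i = 2 - 2 * d * a by linarith]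
    ring
  nlinarith

theorem quadratic_pos_of_two_le_mul {d a : K} (hda : 0 ≤ d * a) (h : 2 ≤ (d - 2) * a) :
    0 < d * (d - 2) * a ^ 2 - 2 * d * a + 1 := by
  nlinarith [mul_nonneg hda (sub_nonneg.2 h)]

theorem two_le_sub_two_mul_of_parity {d : ℤ} {a : K} (hd : 5 ≤ d)
    (haodd : Odd d → ∃ a'' : ℤ, a = (a'' : K)) (ha : 1 / 2 ≤ a) :
    2 ≤ ((d : K) - 2) * a := by
  rcases Int.even_or_odd d with hev | hodd
  · have hd6 : (6 : K) ≤ d := by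
      obtain ⟨k, rfl⟩ := hev
      exact_mod_cast (by omega : 6 ≤ k + k)
    nlinarith
  · obtain ⟨n, rfl⟩ := haodd hodd
    have hn : (1 : K) ≤ n := by
      have : (0 : K) < n := by linarith
      exact_mod_cast (Int.cast_pos.1 this : 0 < n)
    have hd5 : (5 : K) ≤ d := by exact_mod_cast hd
    nlinarith

end

theorem no_hyperelliptic_class_general (d : ℤ) (hd : 5 ≤ d)
    (a : ℚ) (b : Fin 8 → ℚ)
    (haodd : Odd d → ∃ a'' : ℤ, a = (a'' : ℚ))
    (ha : 1/2 ≤ a)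
    (hE : 2 * d * a + ∑ i, b i = 2) :
    2 * d * a ^ 2 - 2 * ∑ i, (b i) ^ 2 < 0 ∧
    ¬(2 * d * a ^ 2 - 2 * ∑ i, (b i) ^ 2 = 0) := by
  have hda : 0 ≤ (d : ℚ) * a :=
    mul_nonneg (by exact_mod_cast (by omega : (0 : ℤ) ≤ d)) (by linarith)
  have hpos := quadratic_pos_of_two_le_mul hda (two_le_sub_two_mul_of_parity hd haodd ha)
  have hneg : 2 * d * a ^ 2 - 2 * ∑ i, (b i) ^ 2 < 0 :=
    (self_intersection_le_of_pairing_eq_two _ _ b hE).trans_lt (neg_neg_of_pos hpos)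
  exact ⟨hneg, hneg.ne⟩

/-- Non-hyperellipticity computation: for `L² = 2d ≥ 10`, any class
    `E = aL + Σ bᵢNᵢ` with `a, bᵢ ∈ ½ℤ` (`a ∈ ℤ` if `d` is odd), `a ≥ ½`,
    `bᵢ ≤ 0` and `E·(L - N̂) = 2` has `E² < 0`; in particular no such `E`
    has `E² = 0`. -/
theorem no_hyperelliptic_class (d : ℤ) (hd : 5 ≤ d)
    (a : ℚ) (b : Fin 8 → ℚ)
    (ha2 : ∃ a' : ℤ, a = (a' : ℚ) / 2)
    (haodd : Odd d → ∃ a'' : ℤ, a = (a'' : ℚ))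
    (ha : 1/2 ≤ a)
    (hb2 : ∀ i, ∃ m : ℤ, b i = (m : ℚ) / 2) (hb : ∀ i, b i ≤ 0)
    (hE : 2 * d * a + ∑ i, b i = 2) :
    2 * d * a ^ 2 - 2 * ∑ i, (b i) ^ 2 < 0 ∧
    ¬(2 * d * a ^ 2 - 2 * ∑ i, (b i) ^ 2 = 0) :=
  no_hyperelliptic_class_general d hd a b haodd ha hE
end
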